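/- arXiv:1508.05461 — 5 statements merged into one kernel-verified Lean document; each statement's English description precedes it below -/
import Mathlib

section
/- If A is a unimodular integer matrix (i.e., for every b in ZA ∩ R≥0A the polyhedron {x : Ax = b, x ≥ 0} has all integral vertices), then A is normal, i.e., ZA ∩ R≥0A = NA. -/
/-!
For `b ∈ ℤA ∩ ℝ≥0A` the polyhedron `P_{A,b}` is nonempty and lies in the nonnegative orthant,
so it has a vertex: the nonnegative coordinate sum attains its minimum on `P_{A,b}` (inside the
compact simplex cut off by any point), the minimizers form a nonempty compact exposed face, and
by Krein–Milman this face has an extreme point, which is then a vertex of `P_{A,b}`.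
Unimodularity makes that vertex an integer, hence natural, solution of `Ax = b`, so `b ∈ ℕA`.
-/

open Matrix

/-- Nonnegative real cone generated by the columns of `A`. -/
def MCone {ι κ : Type*} [Fintype κ] (A : Matrix ι κ ℝ) : Set (ι → ℝ) :=
  {b | ∃ x : κ → ℝ, (∀ j, 0 ≤ x j) ∧ A.mulVec x = b}

/-- Lattice (integer span) generated by the columns of `A`. -/
def MZSpan {ι κ : Type*} [Fintype κ] (A : Matrix ι κ ℝ) : Set (ι → ℝ) :=
  {b | ∃ z : κ → ℤ, A.mulVec (fun j => (z j : ℝ)) = b}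

/-- Affine semigroup (nonnegative integer span) generated by the columns of `A`. -/
def MNSpan {ι κ : Type*} [Fintype κ] (A : Matrix ι κ ℝ) : Set (ι → ℝ) :=
  {b | ∃ x : κ → ℕ, A.mulVec (fun j => (x j : ℝ)) = b}

/-- `A` is normal if `ℤA ∩ ℝ≥0 A = ℕ A`. -/
def MNormal {ι κ : Type*} [Fintype κ] (A : Matrix ι κ ℝ) : Prop :=
  MZSpan A ∩ MCone A = MNSpan A

/-- The polyhedron `P_{A,b} = {x : Ax = b, x ≥ 0}`. -/
def MPoly {ι κ : Type*} [Fintype κ] (A : Matrix ι κ ℝ) (b : ι → ℝ) : Set (κ → ℝ) :=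
  {x | (∀ j, 0 ≤ x j) ∧ A.mulVec x = b}

variable {ι κ : Type*} [Fintype κ]

lemma isCompact_nonneg_sum_le (c : ℝ) :
    IsCompact {x : κ → ℝ | (∀ j, 0 ≤ x j) ∧ ∑ j, x j ≤ c} := by
  refine Metric.isCompact_of_isClosed_isBounded ?_ ?_
  · exact (isClosed_Ici (a := (0 : κ → ℝ))).inter
      (isClosed_le (continuous_finsetSum _ fun j _ => continuous_apply j) continuous_const)
  · refine (isBounded_iff_forall_norm_le).2 ⟨c, fun x ⟨hx0, hxc⟩ => ?_⟩
    have hc : 0 ≤ c := (Finset.sum_nonneg fun j _ => hx0 j).trans hxc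
    refine (pi_norm_le_iff_of_nonneg hc).2 fun j => ?_
    rw [Real.norm_of_nonneg (hx0 j)]
    exact (Finset.single_le_sum (fun i _ => hx0 i) (Finset.mem_univ j)).trans hxc

lemma extremePoints_nonempty_of_nonneg {S : Set (κ → ℝ)} (hS : S.Nonempty) (hSc : IsClosed S)
    (hS0 : ∀ x ∈ S, ∀ j, 0 ≤ x j) : (Set.extremePoints ℝ S).Nonempty := by
  obtain ⟨x₀, hx₀⟩ := hS
  let K := S ∩ {x | (∀ j, 0 ≤ x j) ∧ ∑ j, x j ≤ ∑ j, x₀ j}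
  have hK : IsCompact K := (isCompact_nonneg_sum_le _).inter_left hSc
  obtain ⟨m, hmK, hmin⟩ := hK.exists_isMinOn ⟨x₀, hx₀, hS0 x₀ hx₀, le_rfl⟩
    (continuous_finsetSum _ fun j _ => continuous_apply j).continuousOn
  let l : (κ → ℝ) →L[ℝ] ℝ := -∑ j, ContinuousLinearMap.proj j
  have hl (x : κ → ℝ) : l x = -∑ j, x j := by simp [l]
  let F := {x | x ∈ S ∧ ∀ y ∈ S, l y ≤ l x}
  have hF : IsExposed ℝ S F := fun _ => ⟨l, rfl⟩
  have hmF : m ∈ F := by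
    refine ⟨hmK.1, fun y hy => ?_⟩
    rw [hl, hl, neg_le_neg_iff]
    by_cases hyK : ∑ j, y j ≤ ∑ j, x₀ j
    · exact hmin ⟨hy, hS0 y hy, hyK⟩
    · exact hmK.2.2.trans (le_of_not_ge hyK)
  have hFK : F ⊆ K := fun x ⟨hx, hxmin⟩ => by
    have := hxmin x₀ hx₀
    rw [hl, hl, neg_le_neg_iff] at this
    exact ⟨hx, hS0 x hx, this⟩
  obtain ⟨e, he⟩ := (hK.of_isClosed_subset (hF.isClosed hSc) hFK).extremePoints_nonempty ⟨m, hmF⟩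
  exact ⟨e, hF.isExtreme.extremePoints_subset_extremePoints he⟩

lemma isClosed_MPoly (A : Matrix ι κ ℝ) (b : ι → ℝ) : IsClosed (MPoly A b) :=
  (isClosed_Ici (a := (0 : κ → ℝ))).inter
    (isClosed_eq (continuous_const.matrix_mulVec continuous_id) continuous_const)

lemma MNSpan_subset_MZSpan_inter_MCone (A : Matrix ι κ ℝ) : MNSpan A ⊆ MZSpan A ∩ MCone A :=
  fun _ ⟨x, hx⟩ => ⟨⟨fun j => x j, by simpa using hx⟩, ⟨fun j => x j, fun j => by positivity, hx⟩⟩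

lemma mem_MNSpan_of_mem_MPoly {A : Matrix ι κ ℝ} {b : ι → ℝ} {x : κ → ℝ} (hx : x ∈ MPoly A b)
    (hint : ∀ j, ∃ z : ℤ, x j = z) : b ∈ MNSpan A := by
  choose z hz using hint
  refine ⟨fun j => (z j).toNat, ?_⟩
  have hcast : (fun j => ((z j).toNat : ℝ)) = x := funext fun j => by
    have : 0 ≤ z j := by exact_mod_cast hz j ▸ hx.1 j
    rw [hz j, ← Int.toNat_of_nonneg this, Int.cast_natCast, Int.toNat_natCast]
  rw [hcast, hx.2]

/-- A unimodular integer matrix is normal. -/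
theorem unimodular_implies_normal {d n : ℕ} (A : Matrix (Fin d) (Fin n) ℤ)
    (hA : ∀ b ∈ MZSpan (A.map ((↑) : ℤ → ℝ)) ∩ MCone (A.map ((↑) : ℤ → ℝ)),
      ∀ x ∈ Set.extremePoints ℝ (MPoly (A.map ((↑) : ℤ → ℝ)) b), ∀ j, ∃ z : ℤ, x j = (z : ℝ)) :
    MNormal (A.map ((↑) : ℤ → ℝ)) := by
  refine subset_antisymm (fun b hb => ?_) (MNSpan_subset_MZSpan_inter_MCone _)
  obtain ⟨x₀, hx₀⟩ := hb.2
  obtain ⟨e, he⟩ := extremePoints_nonempty_of_nonneg ⟨x₀, hx₀⟩ (isClosed_MPoly _ b)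
    fun x hx => hx.1
  exact mem_MNSpan_of_mem_MPoly he.1 (hA b hb e he)
end

section
/- Let B be a collection of 2^{n−1} binary n-tuples. Then any two distinct elements of B have Hamming distance at least 2 if and only if all elements of B have Hamming weight of the same parity. -/
/-- The Hamming weight of a binary tuple. -/
def hWeight {n : ℕ} (a : Fin n → Bool) : ℕ := (Finset.univ.filter fun i => a i = true).card

/-!
Since `d(a, b) ≡ w(a) + w(b) (mod 2)`, distinct words of equal weight parity are at even, hence
at least `2`, distance. Conversely, if `B` has minimum distance `2`, deleting the first coordinate
is injective on `B`, so by counting it is a bijection from `B` onto `{0,1}^n`. Two codewords whose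
tails differ in a single coordinate are then at distance exactly `2`, so their weights have the
same parity; as the `n`-cube is connected, the weight parity is constant on `B`.
-/

open Finset Function

lemma hammingDist_mod_two {m : ℕ} (a b : Fin m → Bool) :
    hammingDist a b % 2 = (hWeight a + hWeight b) % 2 := by
  have : hammingDist a b + 2 * #{i | a i && b i} = hWeight a + hWeight b := by
    simp only [hammingDist, hWeight, card_filter, mul_sum, ← sum_add_distrib]
    refine sum_congr rfl fun i _ => ?_
    cases a i <;> cases b i <;> rfl
  omega

lemma hammingDist_update_le {ι β : Type*} [Fintype ι] [DecidableEq ι] [DecidableEq β]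
    (x : ι → β) (i : ι) (v : β) : hammingDist x (update x i v) ≤ 1 := by
  refine (card_le_card fun j hj => ?_).trans (card_singleton i).le
  by_contra hji
  simp_all [update_of_ne (Finset.notMem_singleton.1 hji)]

lemma hammingDist_le_hammingDist_tail_add_one {m : ℕ} {β : Type*} [DecidableEq β]
    (a b : Fin (m + 1) → β) : hammingDist a b ≤ hammingDist (Fin.tail a) (Fin.tail b) + 1 := by
  rw [hammingDist, Fin.card_filter_univ_succ', add_comm]
  exact add_le_add le_rfl (by split_ifs <;> simp)

lemma apply_eq_of_forall_apply_update_eq {ι α β : Type*} [Fintype ι] [DecidableEq ι]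
    {f : (ι → α) → β} (hf : ∀ x i v, f (update x i v) = f x) (x y : ι → α) : f x = f y := by
  suffices ∀ s : Finset ι, ∀ x, (∀ i ∉ s, x i = y i) → f x = f y from this univ x (by simp)
  intro s
  induction s using Finset.induction_on with
  | empty => exact fun x hx => congrArg f (funext fun i => hx i (notMem_empty i))
  | insert i s _ ih =>
    refine fun x hx => (hf x i (y i)).symm.trans (ih _ fun j hj => ?_)
    by_cases hji : j = i
    · simp [hji]
    · rw [update_of_ne hji]
      exact hx j (by simp [hji, hj])

lemma two_le_hammingDist_of_hWeight_mod_two_eq {m : ℕ} {a b : Fin m → Bool} (hab : a ≠ b)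
    (h : hWeight a % 2 = hWeight b % 2) : 2 ≤ hammingDist a b := by
  have := hammingDist_mod_two a b
  have := hammingDist_pos.2 hab
  omega

lemma injOn_tail_of_two_le_hammingDist {m : ℕ} {β : Type*} [DecidableEq β]
    {B : Set (Fin (m + 1) → β)} (hB : ∀ a ∈ B, ∀ b ∈ B, a ≠ b → 2 ≤ hammingDist a b) :
    Set.InjOn Fin.tail B := by
  intro a ha b hb hab
  by_contra hne
  have := hammingDist_le_hammingDist_tail_add_one a b
  rw [hab, hammingDist_self] at this
  have := hB a ha b hb hne
  omega

lemma hWeight_mod_two_eq_of_hammingDist_tail_le_one {m : ℕ} {B : Set (Fin (m + 1) → Bool)}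
    (hB : ∀ a ∈ B, ∀ b ∈ B, a ≠ b → 2 ≤ hammingDist a b) {a b : Fin (m + 1) → Bool}
    (ha : a ∈ B) (hb : b ∈ B) (h : hammingDist (Fin.tail a) (Fin.tail b) ≤ 1) :
    hWeight a % 2 = hWeight b % 2 := by
  rcases eq_or_ne a b with rfl | hne
  · rfl
  have := hB a ha b hb hne
  have := hammingDist_le_hammingDist_tail_add_one a b
  have := hammingDist_mod_two a b
  omega

/-- For a collection `B` of `2^(n-1)` binary `n`-tuples, any two distinct elements of `B`
have Hamming distance at least `2` iff all elements of `B` have Hamming weight of the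
same parity. -/
theorem hamming_parity {n : ℕ} (B : Finset (Fin (n + 1) → Bool)) (hB : B.card = 2 ^ n) :
    (∀ a ∈ B, ∀ b ∈ B, a ≠ b → 2 ≤ hammingDist a b) ↔
      (∀ a ∈ B, ∀ b ∈ B, hWeight a % 2 = hWeight b % 2) := by
  refine ⟨fun hdist => ?_, fun hpar a ha b hb hab =>
    two_le_hammingDist_of_hWeight_mod_two_eq hab (hpar a ha b hb)⟩
  let e : B ≃ (Fin n → Bool) := Equiv.ofBijective (fun a => Fin.tail a.1) <|
    (Fintype.bijective_iff_injective_and_card _).2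
      ⟨(injOn_tail_of_two_le_hammingDist hdist).injective, by simp [hB]⟩
  have tail_symm : ∀ x, Fin.tail (e.symm x).1 = x := e.apply_symm_apply
  have symm_tail : ∀ a (ha : a ∈ B), (e.symm (Fin.tail a)).1 = a := fun a ha =>
    congrArg Subtype.val (e.symm_apply_apply ⟨a, ha⟩)
  have parity_update : ∀ x i v,
      hWeight (e.symm (update x i v)).1 % 2 = hWeight (e.symm x).1 % 2 := fun x i v =>
    hWeight_mod_two_eq_of_hammingDist_tail_le_one hdist (e.symm _).2 (e.symm x).2 <| by
      rw [tail_symm, tail_symm, hammingDist_comm]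
      exact hammingDist_update_le x i v
  intro a ha b hb
  simpa only [symm_tail a ha, symm_tail b hb] using
    apply_eq_of_forall_apply_update_eq (f := fun x => hWeight (e.symm x).1 % 2) parity_update
      (Fin.tail a) (Fin.tail b)
end

section
/- Let A be a matrix of the form whose top row is (t_1,…,t_{n−1},t_n) with t_n > 0, whose remaining rows form a matrix (B | 0) with last column zero below the top row. If A is normal, then the matrix (0; B) obtained by replacing the top row with zeros and deleting the last column is normal. -/
open Matrix

/-!
Write `A'` for the projected matrix. Since the last column of `A` vanishes below the top row,
`A' v` is `A (v, s)` with its top entry replaced by `0`, whatever `s` is. So a point `b` of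
`ℤA' ∩ ℝ≥0 A'`, written both as `A' z` with `z` integral and as `A' x` with `x ≥ 0`, lifts to
`A (z, m) = A (x, s)` as soon as the top entries agree; because `tₙ > 0` this can be arranged
with `m ∈ ℤ` and `s ≥ 0`. Normality of `A` writes this lift as `A ν` with `ν` in `ℕ`, and
forgetting the last coordinate of `ν` expresses `b` in `ℕA'`.
-/

section Normality

variable {ι κ : Type*} [Fintype κ] (A : Matrix ι κ ℝ)

theorem mNSpan_subset_mZSpan_inter_mCone : MNSpan A ⊆ MZSpan A ∩ MCone A := by
  rintro b ⟨x, rfl⟩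
  exact ⟨⟨fun j => x j, by simp⟩, fun j => x j, fun j => by positivity, rfl⟩

theorem MNormal.of_subset (h : MZSpan A ∩ MCone A ⊆ MNSpan A) : MNormal A :=
  h.antisymm (mNSpan_subset_mZSpan_inter_mCone A)

end Normality

theorem exists_int_add_mul_eq_add_mul_nonneg (a b : ℝ) {t : ℝ} (ht : 0 < t) :
    ∃ (m : ℤ) (s : ℝ), 0 ≤ s ∧ a + t * m = b + t * s := by
  refine ⟨⌈(b - a) / t⌉, (a - b) / t + ⌈(b - a) / t⌉, ?_, ?_⟩
  · linarith [Int.le_ceil ((b - a) / t), show (a - b) / t = -((b - a) / t) by ring]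
  · field_simp
    ring

theorem Matrix.mulVec_snoc_apply {ι R : Type*} [CommSemiring R] {n : ℕ}
    (A : Matrix ι (Fin (n + 1)) R) (v : Fin n → R) (s : R) (i : ι) :
    (A *ᵥ Fin.snoc v s) i = ∑ j, A i j.castSucc * v j + A i (Fin.last n) * s := by
  simp [mulVec, dotProduct, Fin.sum_univ_castSucc]

section ZeroTopRow

variable {d n : ℕ} (A : Matrix (Fin (d + 1)) (Fin (n + 1)) ℝ)

def zeroTopRowDropLast : Matrix (Fin (d + 1)) (Fin n) ℝ :=
  of fun i j => if i = 0 then 0 else A i j.castSucc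

theorem zeroTopRowDropLast_mulVec (hzero : ∀ i : Fin d, A i.succ (Fin.last n) = 0)
    (v : Fin n → ℝ) (s : ℝ) :
    zeroTopRowDropLast A *ᵥ v = Function.update (A *ᵥ Fin.snoc v s) 0 0 := by
  funext i
  cases i using Fin.cases with
  | zero => simp [zeroTopRowDropLast, mulVec, dotProduct]
  | succ i =>
    rw [Function.update_of_ne (Fin.succ_ne_zero i), mulVec_snoc_apply, hzero]
    simp [zeroTopRowDropLast, mulVec, dotProduct]

end ZeroTopRow

/-- If `A` is normal, has top row `(t₁,…,tₙ)` with `tₙ > 0`, and the last column vanishes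
below the top row, then the matrix obtained by replacing the top row by zeros and deleting
the last column is normal. -/
theorem normal_zero_top_row {d n : ℕ} (A : Matrix (Fin (d + 1)) (Fin (n + 1)) ℝ)
    (hA : MNormal A)
    (htn : 0 < A 0 (Fin.last n))
    (hzero : ∀ i : Fin d, A i.succ (Fin.last n) = 0) :
    MNormal (Matrix.of fun (i : Fin (d + 1)) (j : Fin n) =>
      if i = 0 then 0 else A i j.castSucc) := by
  change MNormal (zeroTopRowDropLast A)
  refine MNormal.of_subset _ fun b ⟨⟨z, hz⟩, x, hx0, hx⟩ => ?_
  obtain ⟨m, s, hs, htop⟩ := exists_int_add_mul_eq_add_mul_nonneg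
    (∑ j, A 0 j.castSucc * z j) (∑ j, A 0 j.castSucc * x j) htn
  have hproj := hz.trans hx.symm
  rw [zeroTopRowDropLast_mulVec A hzero _ m, zeroTopRowDropLast_mulVec A hzero _ s,
    Function.update_eq_iff] at hproj
  obtain ⟨-, hbelow⟩ := hproj
  have hlift : A *ᵥ Fin.snoc (fun j => (z j : ℝ)) (m : ℝ) = A *ᵥ Fin.snoc x s := by
    funext i
    cases i using Fin.cases with
    | zero => simpa only [mulVec_snoc_apply] using htop
    | succ i => simpa using hbelow i.succ (Fin.succ_ne_zero i)
  obtain ⟨ν, hν⟩ : A *ᵥ Fin.snoc (fun j => (z j : ℝ)) (m : ℝ) ∈ MNSpan A := by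
    rw [← hA]
    refine ⟨⟨Fin.snoc z m, congrArg (A *ᵥ ·) (Fin.comp_snoc Int.cast z m)⟩,
      Fin.snoc x s, Fin.lastCases (by simpa using hs) (fun j => by simpa using hx0 j), hlift.symm⟩
  refine ⟨Fin.init ν, ?_⟩
  rw [← hz, zeroTopRowDropLast_mulVec A hzero _ (ν (Fin.last n)),
    zeroTopRowDropLast_mulVec A hzero _ m, ← hν]
  congr 2
  exact (Fin.comp_snoc Nat.cast (Fin.init ν) _).symm.trans (by rw [Fin.snoc_init_self]; rfl)
end

section
/- For any simplicial complex C on [n] with d = (2,…,2), the 0/1 matrix A_C (in its full-rank face representation) contains a square submatrix of size equal to rank(A_C) with determinant 1; consequently ZA_C ∩ Z^d equals ZA_C where rows are restricted appropriately, i.e., the lattice generated by the columns of A_C is the full integer lattice of its row span. -/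
open Matrix

/-- Full-rank face representation of the binary hierarchical matrix of a simplicial complex:
rows indexed by faces, columns by binary `n`-tuples, entry `1` iff the tuple vanishes on
the face. -/
def faceMat {n : ℕ} (C : Finset (Finset (Fin n))) :
    Matrix {F // F ∈ C} (Fin n → Bool) ℝ :=
  Matrix.of fun F b => if ∀ v ∈ F.1, b v = false then 1 else 0

/-!
Give the face `F` the column whose zeros are exactly the vertices of `F`. Its entry in the row
of a face `G` is `1` iff `G ⊆ F`, so these columns form the zeta matrix of the face poset, which
is unitriangular for any linear extension of inclusion and hence has determinant `1`. An integer
matrix with a maximal square submatrix of unit determinant maps `ℤ^κ` onto `ℤ^ι`, which is the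
lattice statement.
-/

def zetaMatrix (R P : Type*) [LE P] [DecidableLE P] [Zero R] [One R] : Matrix P P R :=
  of fun x y => if x ≤ y then 1 else 0

theorem det_zetaMatrix (R P : Type*) [CommRing R] [PartialOrder P] [DecidableLE P] [Fintype P]
    [DecidableEq P] : (zetaMatrix R P).det = 1 := by
  have htri : (zetaMatrix R P).BlockTriangular toLinearExtension := fun x y hyx =>
    if_neg fun hxy => (toLinearExtension.monotone hxy).not_gt hyx
  rw [htri.det]
  refine Finset.prod_eq_one fun k _ => ?_
  have hblock : (zetaMatrix R P).toSquareBlock toLinearExtension k = 1 := by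
    ext ⟨x, hx⟩ ⟨y, hy⟩
    obtain rfl : x = y := hx.trans hy.symm
    simp [toSquareBlock_def, zetaMatrix]
  rw [hblock, det_one]

namespace Matrix

variable {ι κ R : Type*} [Fintype ι] [DecidableEq ι] [Fintype κ] [DecidableEq κ] [CommRing R]

theorem mulVec_surjective_of_isUnit_det_submatrix (A : Matrix ι κ R) (cols : ι → κ)
    (h : IsUnit (A.submatrix id cols).det) : Function.Surjective A.mulVec := by
  intro b
  obtain ⟨y, rfl⟩ := mulVec_surjective_iff_isUnit.mpr ((isUnit_iff_isUnit_det _).mpr h) b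
  refine ⟨(1 : Matrix κ κ R).submatrix id cols *ᵥ y, ?_⟩
  rw [mulVec_mulVec]
  exact congrArg (· *ᵥ y) (mul_submatrix_one (Equiv.refl κ) cols A)

end Matrix

theorem mem_MZSpan_map_intCast_iff {ι κ : Type*} [Fintype κ] {A : Matrix ι κ ℤ}
    (hA : Function.Surjective A.mulVec) (b : ι → ℝ) :
    b ∈ MZSpan (A.map (↑)) ↔ ∀ i, ∃ z : ℤ, b i = z := by
  have hcast : ∀ z : κ → ℤ, A.map (↑) *ᵥ (fun j => (z j : ℝ)) = fun i => ((A *ᵥ z) i : ℝ) :=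
    fun z => funext fun i => (RingHom.map_mulVec (Int.castRingHom ℝ) A z i).symm
  constructor
  · rintro ⟨z, rfl⟩ i
    exact ⟨(A *ᵥ z) i, congrFun (hcast z) i⟩
  · intro hb
    choose bz hbz using hb
    obtain ⟨z, hz⟩ := hA bz
    exact ⟨z, by rw [hcast, hz]; exact (funext hbz).symm⟩

theorem MZSpan_subset_span_columns {ι κ : Type*} [Fintype κ] (A : Matrix ι κ ℝ) :
    MZSpan A ⊆ Submodule.span ℝ (Set.range Aᵀ) := by
  rintro _ ⟨z, rfl⟩
  exact (range_mulVecLin A).le ⟨_, rfl⟩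

section FaceMatrix

variable {n : ℕ}

def zerosAt (F : Finset (Fin n)) : Fin n → Bool := fun v => decide (v ∉ F)

theorem zerosAt_eq_false_iff {F : Finset (Fin n)} {v : Fin n} : zerosAt F v = false ↔ v ∈ F := by
  simp [zerosAt]

theorem zerosAt_injective : Function.Injective (zerosAt (n := n)) := fun F G h =>
  Finset.ext fun v => by rw [← zerosAt_eq_false_iff, ← zerosAt_eq_false_iff, h]

def faceMatInt (C : Finset (Finset (Fin n))) : Matrix {F // F ∈ C} (Fin n → Bool) ℤ :=
  of fun F b => if ∀ v ∈ F.1, b v = false then 1 else 0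

theorem faceMat_eq_map (C : Finset (Finset (Fin n))) : faceMat C = (faceMatInt C).map (↑) := by
  ext F b
  simp [faceMat, faceMatInt, apply_ite (Int.cast : ℤ → ℝ)]

theorem faceMatInt_submatrix_zerosAt (C : Finset (Finset (Fin n))) :
    (faceMatInt C).submatrix id (fun G => zerosAt G.1) = zetaMatrix ℤ {F // F ∈ C} := by
  ext F G
  simp only [faceMatInt, zetaMatrix, submatrix_apply, of_apply, id, zerosAt_eq_false_iff]
  exact if_congr Iff.rfl rfl rfl

end FaceMatrix

theorem faceMat_unimodular_submatrix_general {n : ℕ} (C : Finset (Finset (Fin n))) :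
    (∃ cols : {F // F ∈ C} → (Fin n → Bool),
        Function.Injective cols ∧ ((faceMat C).submatrix id cols).det = 1) ∧
    (∀ b : {F // F ∈ C} → ℝ, b ∈ MZSpan (faceMat C) ↔
        (b ∈ Submodule.span ℝ (Set.range (faceMat C).transpose) ∧ ∀ i, ∃ z : ℤ, b i = z)) := by
  set cols : {F // F ∈ C} → (Fin n → Bool) := fun G => zerosAt G.1
  have hdet : ((faceMatInt C).submatrix id cols).det = 1 := by
    rw [faceMatInt_submatrix_zerosAt, det_zetaMatrix]
  have hsurj := (faceMatInt C).mulVec_surjective_of_isUnit_det_submatrix cols (hdet ▸ isUnit_one)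
  refine ⟨⟨cols, fun F G h => Subtype.ext (zerosAt_injective h), ?_⟩, fun b => ?_⟩
  · rw [faceMat_eq_map, submatrix_map, ← Int.cast_det, hdet, Int.cast_one]
  constructor
  · exact fun hb => ⟨MZSpan_subset_span_columns _ hb,
      (mem_MZSpan_map_intCast_iff hsurj b).mp (faceMat_eq_map C ▸ hb)⟩
  · rintro ⟨-, hint⟩
    rw [faceMat_eq_map]
    exact (mem_MZSpan_map_intCast_iff hsurj b).mpr hint

/-- For a simplicial complex `C` (given as the finset of all its faces, closed under taking
subsets and containing the empty face), the face matrix contains a maximal square submatrix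
with determinant `1`; consequently, the lattice generated by its columns is the full integer
lattice of the column span. -/
theorem faceMat_unimodular_submatrix {n : ℕ} (C : Finset (Finset (Fin n)))
    (hempty : ∅ ∈ C) (hdown : ∀ F ∈ C, ∀ G ⊆ F, G ∈ C) :
    (∃ cols : {F // F ∈ C} → (Fin n → Bool),
        Function.Injective cols ∧ ((faceMat C).submatrix id cols).det = 1) ∧
    (∀ b : {F // F ∈ C} → ℝ, b ∈ MZSpan (faceMat C) ↔
        (b ∈ Submodule.span ℝ (Set.range (faceMat C).transpose) ∧ ∀ i, ∃ z : ℤ, b i = z)) :=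
  faceMat_unimodular_submatrix_general C
end

section
/- Let A ∈ Z^{d×n} with columns a_1,…,a_n where the entries of a_n have no common divisor. Let A' consist of the first n−1 columns of P_{a_n}A (orthogonal projection along a_n). Then the toric ideal I_{A'} equals φ(I_A), where φ : K[x_1,…,x_n] → K[x_1,…,x_{n−1}] is the substitution homomorphism sending x_n to 1. -/
/-!
Since `P_a a = 0` for the last column `a` of `A`, the projected matrix `A'` acts on `u'` as
`P_a A` acts on `(u', k)`, for every last coordinate `k`. Hence `A' u' = A' v'` iff
`A (u', 0) - A (v', 0)` lies in `ker P_a = ℝ a`, and as the entries of `a` are coprime this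
multiple of `a` is an integer multiple `t a`. Raising the last exponents to `max(-t, 0)` and
`max(t, 0)` turns `x^u' - x^v'` into a binomial of `I_A` which `xₙ ↦ 1` maps back to it;
conversely `xₙ ↦ 1` sends each binomial of `I_A` to a binomial of `I_{A'}`.
-/

open Matrix MvPolynomial

/-- The orthogonal projection matrix onto the hyperplane orthogonal to `v`. -/
noncomputable def projMat {r : ℕ} (v : Fin r → ℝ) : Matrix (Fin r) (Fin r) ℝ :=
  1 - (∑ i, v i * v i)⁻¹ • Matrix.vecMulVec v v

/-- The toric ideal of an integer matrix `A`: generated by the binomials `x^u - x^v`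
with `Au = Av`. -/
noncomputable def toricIdeal (K : Type*) [Field K] {d n : ℕ} (A : Matrix (Fin d) (Fin n) ℤ) :
    Ideal (MvPolynomial (Fin n) K) :=
  Ideal.span {p | ∃ u v : Fin n →₀ ℕ,
    A.mulVec (fun j => (u j : ℤ)) = A.mulVec (fun j => (v j : ℤ)) ∧
    p = monomial u 1 - monomial v 1}

/-- The toric ideal of a real matrix. -/
noncomputable def toricIdealR (K : Type*) [Field K] {d n : ℕ} (A : Matrix (Fin d) (Fin n) ℝ) :
    Ideal (MvPolynomial (Fin n) K) :=
  Ideal.span {p | ∃ u v : Fin n →₀ ℕ,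
    A.mulVec (fun j => (u j : ℝ)) = A.mulVec (fun j => (v j : ℝ)) ∧
    p = monomial u 1 - monomial v 1}

namespace Finsupp

variable {M : Type*} [Zero M] {n : ℕ}

noncomputable def init (s : Fin (n + 1) →₀ M) : Fin n →₀ M :=
  equivFunOnFinite.symm (Fin.init s)

noncomputable def snoc (s : Fin n →₀ M) (y : M) : Fin (n + 1) →₀ M :=
  equivFunOnFinite.symm (Fin.snoc (α := fun _ => M) s y)

@[simp] theorem init_apply (s : Fin (n + 1) →₀ M) (i : Fin n) : init s i = s i.castSucc := rfl

@[simp] theorem snoc_castSucc (s : Fin n →₀ M) (y : M) (i : Fin n) :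
    snoc s y i.castSucc = s i := by
  simp [snoc]

@[simp] theorem snoc_last (s : Fin n →₀ M) (y : M) : snoc s y (Fin.last n) = y := by
  simp [snoc]

@[simp] theorem init_snoc (s : Fin n →₀ M) (y : M) : init (snoc s y) = s := by
  ext i; simp

end Finsupp

theorem exists_eq_smul_of_mul_eq_mul {ι R : Type*} [Fintype ι] [CommMonoidWithZero R]
    [NormalizedGCDMonoid R] {a z : ι → R} (ha : Finset.univ.gcd a = 1)
    (hza : ∀ i j, z i * a j = z j * a i) : ∃ t : R, z = t • a := by
  rcases subsingleton_or_nontrivial R with hR | hR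
  · exact ⟨0, Subsingleton.elim _ _⟩
  obtain ⟨i₀, hi₀⟩ : ∃ i, a i ≠ 0 := by
    by_contra! h0
    exact one_ne_zero (ha ▸ Finset.gcd_eq_zero_iff.2 fun i _ => h0 i)
  obtain ⟨t, ht⟩ : a i₀ ∣ z i₀ := by
    have hdvd : a i₀ ∣ Finset.univ.gcd fun i => z i₀ * a i :=
      Finset.dvd_gcd fun i _ => ⟨z i, by rw [hza, mul_comm]⟩
    simpa [ha] using hdvd.trans (Finset.gcd_mul_left' _ _ (z i₀)).dvd
  refine ⟨t, funext fun i => mul_right_cancel₀ hi₀ ?_⟩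
  rw [hza, ht, Pi.smul_apply, smul_eq_mul]
  ac_rfl

theorem Matrix.mulVec_eq_mulVec_init_add {ι R : Type*} [Fintype ι] [CommSemiring R] {m : ℕ}
    (M : Matrix ι (Fin (m + 1)) R) (w : Fin (m + 1) → R) :
    M *ᵥ w = (of fun i j => M i j.castSucc) *ᵥ Fin.init w +
      w (Fin.last m) • fun i => M i (Fin.last m) := by
  ext i
  simp [mulVec, dotProduct, Fin.sum_univ_castSucc, Fin.init, mul_comm]

theorem projMat_mulVec {r : ℕ} (v z : Fin r → ℝ) :
    projMat v *ᵥ z = z - ((v ⬝ᵥ z) / (v ⬝ᵥ v)) • v := by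
  ext i
  simp [projMat, sub_mulVec, smul_mulVec, vecMulVec_mulVec, div_eq_inv_mul, dotProduct]
  ring

theorem projMat_mulVec_self {r : ℕ} (v : Fin r → ℝ) : projMat v *ᵥ v = 0 := by
  rw [projMat_mulVec]
  rcases eq_or_ne (v ⬝ᵥ v) 0 with h | h
  · simp [dotProduct_self_eq_zero.1 h]
  · rw [div_self h, one_smul, sub_self]

theorem projMat_mulVec_eq_zero_iff {r : ℕ} {v z : Fin r → ℝ} :
    projMat v *ᵥ z = 0 ↔ ∃ c : ℝ, z = c • v := by
  constructor
  · intro h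
    exact ⟨_, sub_eq_zero.1 ((projMat_mulVec v z).symm.trans h)⟩
  · rintro ⟨c, rfl⟩
    rw [mulVec_smul, projMat_mulVec_self, smul_zero]

theorem projMat_mulVec_intCast_eq_zero_iff {r : ℕ} {a z : Fin r → ℤ}
    (ha : Finset.univ.gcd a = 1) :
    projMat (fun i => (a i : ℝ)) *ᵥ (fun i => (z i : ℝ)) = 0 ↔ ∃ t : ℤ, z = t • a := by
  rw [projMat_mulVec_eq_zero_iff]
  constructor
  · rintro ⟨c, hc⟩
    refine exists_eq_smul_of_mul_eq_mul ha fun i j => ?_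
    have hz : ∀ i, (z i : ℝ) = c * a i := fun i => congrFun hc i
    exact_mod_cast (by rw [hz, hz]; ring : (z i : ℝ) * a j = z j * a i)
  · rintro ⟨t, rfl⟩
    exact ⟨t, by ext i; simp⟩

theorem Matrix.mulVec_natCast_snoc {ι R : Type*} [Fintype ι] [CommSemiring R] {m : ℕ}
    (M : Matrix ι (Fin (m + 1)) R) (u : Fin m →₀ ℕ) (k : ℕ) :
    M *ᵥ (fun j => (u.snoc k j : R)) =
      M *ᵥ (fun j => (u.snoc 0 j : R)) + (k : R) • fun i => M i (Fin.last m) := by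
  have hinit : ∀ l : ℕ, Fin.init (fun j => (u.snoc l j : R)) = fun j => (u j : R) := fun l => by
    ext j; simp [Fin.init]
  rw [mulVec_eq_mulVec_init_add M, mulVec_eq_mulVec_init_add M (fun j => (u.snoc 0 j : R)),
    hinit, hinit]
  simp

theorem Matrix.mulVec_snoc_toNat_eq_of_sub_eq_smul {ι : Type*} [Fintype ι] {m : ℕ}
    (M : Matrix ι (Fin (m + 1)) ℤ) (u v : Fin m →₀ ℕ) (t : ℤ)
    (h : M *ᵥ (fun j => (u.snoc 0 j : ℤ)) - M *ᵥ (fun j => (v.snoc 0 j : ℤ)) =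
      t • fun i => M i (Fin.last m)) :
    M *ᵥ (fun j => (u.snoc (-t).toNat j : ℤ)) = M *ᵥ (fun j => (v.snoc t.toNat j : ℤ)) := by
  rw [mulVec_natCast_snoc, mulVec_natCast_snoc M v]
  ext i
  have hi := congrFun h i
  simp only [Pi.add_apply, Pi.sub_apply, Pi.smul_apply, smul_eq_mul] at hi ⊢
  have : ((t.toNat : ℕ) : ℤ) - ((-t).toNat : ℕ) = t := by omega
  linear_combination hi - M i (Fin.last m) * this

theorem Matrix.map_intCast_mulVec_natCast {ι κ : Type*} [Fintype κ] (A : Matrix ι κ ℤ) (u : κ → ℕ) :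
    A.map ((↑) : ℤ → ℝ) *ᵥ (fun j => (u j : ℝ)) =
      fun i => ((A *ᵥ fun j => (u j : ℤ)) i : ℝ) := by
  ext i
  simp [mulVec, dotProduct]

section Projection

variable {d m : ℕ}

noncomputable def projectedMatrix (A : Matrix (Fin d) (Fin (m + 1)) ℤ) :
    Matrix (Fin d) (Fin m) ℝ :=
  of fun i j => (projMat (fun i => (A i (Fin.last m) : ℝ)) * A.map ((↑) : ℤ → ℝ)) i j.castSucc

theorem projectedMatrix_mulVec_init (A : Matrix (Fin d) (Fin (m + 1)) ℤ) (w : Fin (m + 1) → ℝ) :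
    projectedMatrix A *ᵥ Fin.init w =
      projMat (fun i => (A i (Fin.last m) : ℝ)) *ᵥ (A.map ((↑) : ℤ → ℝ) *ᵥ w) := by
  have hcol : (fun i => (projMat (fun i => (A i (Fin.last m) : ℝ)) * A.map ((↑) : ℤ → ℝ)) i
      (Fin.last m)) = 0 := projMat_mulVec_self _
  rw [mulVec_mulVec, mulVec_eq_mulVec_init_add (_ * _) w, hcol, smul_zero, add_zero]
  rfl

theorem projectedMatrix_mulVec_natCast_init (A : Matrix (Fin d) (Fin (m + 1)) ℤ)
    (u : Fin (m + 1) →₀ ℕ) :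
    projectedMatrix A *ᵥ (fun j => (u.init j : ℝ)) =
      projMat (fun i => (A i (Fin.last m) : ℝ)) *ᵥ
        fun i => ((A *ᵥ fun j => (u j : ℤ)) i : ℝ) := by
  rw [← map_intCast_mulVec_natCast]
  exact projectedMatrix_mulVec_init A fun j => (u j : ℝ)

theorem projectedMatrix_mulVec_init_eq_iff (A : Matrix (Fin d) (Fin (m + 1)) ℤ)
    (hA : Finset.univ.gcd (fun i => A i (Fin.last m)) = 1) (u v : Fin (m + 1) →₀ ℕ) :
    projectedMatrix A *ᵥ (fun j => (u.init j : ℝ)) =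
        projectedMatrix A *ᵥ (fun j => (v.init j : ℝ)) ↔
      ∃ t : ℤ, A *ᵥ (fun j => (u j : ℤ)) - A *ᵥ (fun j => (v j : ℤ)) =
        t • fun i => A i (Fin.last m) := by
  rw [← projMat_mulVec_intCast_eq_zero_iff hA, ← sub_eq_zero,
    projectedMatrix_mulVec_natCast_init, projectedMatrix_mulVec_natCast_init, ← mulVec_sub]
  simp only [Pi.sub_apply, Int.cast_sub]
  rfl

end Projection

noncomputable def evalLastOne (K : Type*) [CommSemiring K] (m : ℕ) :
    MvPolynomial (Fin (m + 1)) K →ₐ[K] MvPolynomial (Fin m) K :=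
  aeval fun i => Fin.lastCases 1 (fun j => X j) i

theorem evalLastOne_monomial {K : Type*} [CommSemiring K] {m : ℕ} (u : Fin (m + 1) →₀ ℕ) :
    evalLastOne K m (monomial u 1) = monomial u.init 1 := by
  rw [evalLastOne, aeval_monomial, monomial_eq, Finsupp.prod_fintype _ _ fun i => pow_zero _,
    Finsupp.prod_fintype _ _ fun i => pow_zero _, Fin.prod_univ_castSucc]
  simp

/-- If the entries of the last column of `A` have no common divisor and `A'` consists of the
first `n-1` columns of `P_{aₙ} A`, then `I_{A'} = φ(I_A)` where `φ` sends `xₙ` to `1`. -/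
theorem toricIdeal_projection (K : Type*) [Field K] {d m : ℕ}
    (A : Matrix (Fin d) (Fin (m + 1)) ℤ)
    (hgcd : Finset.univ.gcd (fun i => A i (Fin.last m)) = 1) :
    toricIdealR K (Matrix.of fun (i : Fin d) (j : Fin m) =>
        (projMat (fun i => (A i (Fin.last m) : ℝ)) * A.map ((↑) : ℤ → ℝ)) i j.castSucc) =
      Ideal.map (aeval (R := K) fun i : Fin (m + 1) =>
          Fin.lastCases (1 : MvPolynomial (Fin m) K) (fun j => X j) i)
        (toricIdeal K A) := by
  change toricIdealR K (projectedMatrix A) = Ideal.map (evalLastOne K m) (toricIdeal K A)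
  rw [toricIdeal, toricIdealR, Ideal.map_span]
  congr 1
  ext p
  constructor
  · rintro ⟨u', v', h, rfl⟩
    obtain ⟨t, ht⟩ := (projectedMatrix_mulVec_init_eq_iff A hgcd (u'.snoc 0) (v'.snoc 0)).1
      (by simpa using h)
    exact ⟨_, ⟨_, _, A.mulVec_snoc_toNat_eq_of_sub_eq_smul u' v' t ht, rfl⟩,
      by simp [evalLastOne_monomial]⟩
  · rintro ⟨_, ⟨u, v, h, rfl⟩, rfl⟩
    exact ⟨u.init, v.init, (projectedMatrix_mulVec_init_eq_iff A hgcd u v).2 ⟨0, by simp [h]⟩,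
      by simp [evalLastOne_monomial]⟩
end
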